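/- arXiv:1509.01177 — 2 statements merged into one kernel-verified Lean document; each statement's English description precedes it below -/
import Mathlib

section
/- Let a > 1, b > 1 and k ≥ 0 be real numbers. For t ≥ 0 set S₂(t) = Σ_{i=2}^{∞} i^{−k}·a^{−i}·exp(−b^{−i}·t). Then for every t ≥ 0 one has a^{−1}·∫_{2}^{∞} x^{−k}·a^{−(x−1)}·exp(−b^{−(x−1)}·t) dx ≤ S₂(t) ≤ a·∫_{2}^{∞} (x−1)^{−k}·a^{−x}·exp(−b^{−x}·t) dx, all three quantities being finite. -/
/-!
On `[n + 2, n + 3)` the factors of `p ^ (-k) * a ^ (-q) * exp (-b ^ (-r) * t)` are monotone in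
`p`, `q`, `r` (decreasing, decreasing, increasing). Comparing each factor with its value at
`n + 2` shows that `a⁻¹` times the first integrand is at most the `n`-th term, which in turn is
at most `a` times the second integrand; the factor `a` absorbs the unit shift in the exponent of
`a`. Summing over these unit intervals, which tile `[2, ∞)`, gives both bounds. Both integrands
are dominated by a multiple of `a ^ (-x)`, and summability of the series comes with the upper
comparison.
-/

open MeasureTheory Set Function

section UnitIntervals

theorem iUnion_Ico_add_natCast_eq_Ici (c : ℝ) :
    ⋃ n : ℕ, Ico (c + n) (c + n + 1) = Ici c := by
  ext x
  simp only [mem_iUnion, mem_Ico, mem_Ici]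
  refine ⟨fun ⟨n, hn, _⟩ => le_trans (le_add_of_nonneg_right n.cast_nonneg) hn, fun hx => ?_⟩
  refine ⟨⌊x - c⌋₊, ?_, ?_⟩
  · linarith [Nat.floor_le (sub_nonneg.mpr hx)]
  · linarith [Nat.lt_floor_add_one (x - c)]

theorem pairwise_disjoint_Ico_add_natCast (c : ℝ) :
    Pairwise (Disjoint on fun n : ℕ => Ico (c + n) (c + n + 1)) := fun m n hmn => by
  simpa using pairwise_disjoint_Ico_add_intCast c (Int.ofNat_inj.not.mpr hmn)

theorem Ico_add_natCast_subset_Ici (c : ℝ) (n : ℕ) : Ico (c + n) (c + n + 1) ⊆ Ici c :=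
  Ico_subset_Ici_self.trans (Ici_subset_Ici.mpr (le_add_of_nonneg_right n.cast_nonneg))

theorem hasSum_setIntegral_Ico_add_natCast {E : Type*} [NormedAddCommGroup E] [NormedSpace ℝ E]
    {g : ℝ → E} {c : ℝ} (hg : IntegrableOn g (Ici c)) :
    HasSum (fun n : ℕ => ∫ x in Ico (c + n) (c + n + 1), g x) (∫ x in Ici c, g x) := by
  rw [← iUnion_Ico_add_natCast_eq_Ici] at hg ⊢
  exact hasSum_integral_iUnion (fun _ => measurableSet_Ico)
    (pairwise_disjoint_Ico_add_natCast c) hg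

theorem setIntegral_Ico_add_one_eq_const (s C : ℝ) : ∫ _ in Ico s (s + 1), C = C := by
  simp

variable {g : ℝ → ℝ} {u : ℕ → ℝ} {c : ℝ}

theorem integral_Ici_le_tsum_of_le (hg : IntegrableOn g (Ici c)) (hu : Summable u)
    (h : ∀ n : ℕ, ∀ x ∈ Ico (c + n) (c + n + 1), g x ≤ u n) :
    ∫ x in Ici c, g x ≤ ∑' n, u n := by
  refine hasSum_le (fun n => ?_) (hasSum_setIntegral_Ico_add_natCast hg) hu.hasSum
  calc ∫ x in Ico (c + n) (c + n + 1), g x ≤ ∫ _ in Ico (c + n) (c + n + 1), u n :=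
        setIntegral_mono_on (hg.mono_set (Ico_add_natCast_subset_Ici c n))
          (integrableOn_const measure_Ico_lt_top.ne) measurableSet_Ico (h n)
    _ = u n := setIntegral_Ico_add_one_eq_const _ _

theorem summable_and_tsum_le_integral_Ici_of_le (hu : 0 ≤ u) (hg : IntegrableOn g (Ici c))
    (h : ∀ n : ℕ, ∀ x ∈ Ico (c + n) (c + n + 1), u n ≤ g x) :
    Summable u ∧ ∑' n, u n ≤ ∫ x in Ici c, g x := by
  have hint := hasSum_setIntegral_Ico_add_natCast hg
  have hle : ∀ n : ℕ, u n ≤ ∫ x in Ico (c + n) (c + n + 1), g x := fun n =>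
    calc u n = ∫ _ in Ico (c + n) (c + n + 1), u n := (setIntegral_Ico_add_one_eq_const _ _).symm
      _ ≤ ∫ x in Ico (c + n) (c + n + 1), g x :=
        setIntegral_mono_on (integrableOn_const measure_Ico_lt_top.ne)
          (hg.mono_set (Ico_add_natCast_subset_Ici c n)) measurableSet_Ico (h n)
  have hu' : Summable u := hint.summable.of_nonneg_of_le hu hle
  exact ⟨hu', hasSum_le hle hu'.hasSum hint⟩

end UnitIntervals

section ExponentialDecay

variable {a b k t : ℝ}

theorem integrableOn_Ici_rpow_neg (ha : 1 < a) (c : ℝ) :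
    IntegrableOn (fun x : ℝ => a ^ (-x)) (Ici c) := by
  rw [integrableOn_Ici_iff_integrableOn_Ioi]
  refine (exp_neg_integrableOn_Ioi c (Real.log_pos ha)).congr_fun (fun x _ => ?_) measurableSet_Ioi
  rw [Real.rpow_def_of_pos (by linarith)]
  ring_nf

theorem integrableOn_Ici_of_le_const_mul_rpow_neg {g : ℝ → ℝ} {c C : ℝ} (ha : 1 < a)
    (hg : Measurable g) (hg0 : ∀ x ∈ Ici c, 0 ≤ g x) (hle : ∀ x ∈ Ici c, g x ≤ C * a ^ (-x)) :
    IntegrableOn g (Ici c) :=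
  ((integrableOn_Ici_rpow_neg ha c).const_mul C).mono' hg.aestronglyMeasurable <|
    ae_restrict_of_forall_mem measurableSet_Ici fun x hx => by
      rw [Real.norm_of_nonneg (hg0 x hx)]
      exact hle x hx

theorem rpow_neg_sub_one (ha : 0 < a) (x : ℝ) : a ^ (-(x - 1)) = a * a ^ (-x) := by
  rw [neg_sub, Real.rpow_sub ha, Real.rpow_one, Real.rpow_neg ha.le, div_eq_mul_inv]

theorem rpow_neg_mul_rpow_neg_mul_exp_le {p p' q q' r r' : ℝ} (ha : 1 ≤ a) (hb : 1 ≤ b)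
    (hk : 0 ≤ k) (ht : 0 ≤ t) (hp' : 0 < p') (hp : p' ≤ p) (hq : q' ≤ q) (hr : r ≤ r') :
    p ^ (-k) * a ^ (-q) * Real.exp (-b ^ (-r) * t) ≤
      p' ^ (-k) * a ^ (-q') * Real.exp (-b ^ (-r') * t) := by
  have hpk : p ^ (-k) ≤ p' ^ (-k) := Real.rpow_le_rpow_of_nonpos hp' hp (neg_nonpos.mpr hk)
  have haq : a ^ (-q) ≤ a ^ (-q') := by gcongr
  have hexp : Real.exp (-b ^ (-r) * t) ≤ Real.exp (-b ^ (-r') * t) := by gcongr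
  have : 0 ≤ p := hp'.le.trans hp
  exact mul_le_mul (mul_le_mul hpk haq (by positivity) (by positivity)) hexp (by positivity)
    (by positivity)

theorem rpow_neg_mul_rpow_neg_mul_exp_le_rpow_neg {p q r : ℝ} (ha : 0 ≤ a) (hb : 0 ≤ b)
    (hk : 0 ≤ k) (ht : 0 ≤ t) (hp : 1 ≤ p) :
    p ^ (-k) * a ^ (-q) * Real.exp (-b ^ (-r) * t) ≤ a ^ (-q) := by
  have hpk : p ^ (-k) ≤ 1 := Real.rpow_le_one_of_one_le_of_nonpos hp (neg_nonpos.mpr hk)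
  have hexp : Real.exp (-b ^ (-r) * t) ≤ 1 := by
    rw [Real.exp_le_one_iff, neg_mul, neg_nonpos]
    positivity
  calc p ^ (-k) * a ^ (-q) * Real.exp (-b ^ (-r) * t) ≤ 1 * a ^ (-q) * 1 := by gcongr
    _ = a ^ (-q) := by ring

end ExponentialDecay

/-- integral bounds for `S₂(t) = Σ_{i=2}^∞ i^{-k} a^{-i} exp(-b^{-i}t)`:
`a⁻¹ ∫_2^∞ x^{-k} a^{-(x-1)} exp(-b^{-(x-1)}t) dx ≤ S₂(t) ≤
 a ∫_2^∞ (x-1)^{-k} a^{-x} exp(-b^{-x}t) dx`, all quantities being finite. -/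
theorem series_integral_bounds
    (a b k : ℝ) (ha : 1 < a) (hb : 1 < b) (hk : 0 ≤ k) :
    ∀ t : ℝ, 0 ≤ t →
      Summable (fun i : ℕ =>
        ((i : ℝ) + 2) ^ (-k) * a ^ (-((i : ℝ) + 2)) *
          Real.exp (-b ^ (-((i : ℝ) + 2)) * t)) ∧
      IntegrableOn (fun x : ℝ =>
        x ^ (-k) * a ^ (-(x - 1)) * Real.exp (-b ^ (-(x - 1)) * t)) (Set.Ici 2) ∧
      IntegrableOn (fun x : ℝ =>
        (x - 1) ^ (-k) * a ^ (-x) * Real.exp (-b ^ (-x) * t)) (Set.Ici 2) ∧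
      a⁻¹ * ∫ x in Set.Ici (2 : ℝ),
          x ^ (-k) * a ^ (-(x - 1)) * Real.exp (-b ^ (-(x - 1)) * t) ≤
        (∑' i : ℕ, ((i : ℝ) + 2) ^ (-k) * a ^ (-((i : ℝ) + 2)) *
          Real.exp (-b ^ (-((i : ℝ) + 2)) * t)) ∧
      (∑' i : ℕ, ((i : ℝ) + 2) ^ (-k) * a ^ (-((i : ℝ) + 2)) *
          Real.exp (-b ^ (-((i : ℝ) + 2)) * t)) ≤
        a * ∫ x in Set.Ici (2 : ℝ),
          (x - 1) ^ (-k) * a ^ (-x) * Real.exp (-b ^ (-x) * t) := by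
  intro t ht
  have ha0 : 0 < a := by linarith
  have hb0 : 0 < b := by linarith
  have hL : IntegrableOn (fun x : ℝ =>
      x ^ (-k) * a ^ (-(x - 1)) * Real.exp (-b ^ (-(x - 1)) * t)) (Ici 2) :=
    integrableOn_Ici_of_le_const_mul_rpow_neg ha (by fun_prop)
      (fun x (hx : 2 ≤ x) => by
        have : 0 ≤ x := by linarith
        positivity)
      fun x (hx : 2 ≤ x) => (rpow_neg_mul_rpow_neg_mul_exp_le_rpow_neg ha0.le hb0.le hk ht
        (by linarith)).trans_eq (rpow_neg_sub_one ha0 x)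
  have hH : IntegrableOn (fun x : ℝ =>
      (x - 1) ^ (-k) * a ^ (-x) * Real.exp (-b ^ (-x) * t)) (Ici 2) :=
    integrableOn_Ici_of_le_const_mul_rpow_neg (C := 1) ha (by fun_prop)
      (fun x (hx : 2 ≤ x) => by
        have : 0 ≤ x - 1 := by linarith
        positivity)
      fun x (hx : 2 ≤ x) => (rpow_neg_mul_rpow_neg_mul_exp_le_rpow_neg ha0.le hb0.le hk ht
        (by linarith)).trans_eq (one_mul _).symm
  obtain ⟨hsum, hupper⟩ := summable_and_tsum_le_integral_Ici_of_le (c := 2)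
    (u := fun i : ℕ => ((i : ℝ) + 2) ^ (-k) * a ^ (-((i : ℝ) + 2)) *
      Real.exp (-b ^ (-((i : ℝ) + 2)) * t))
    (fun n => by positivity) (hH.const_mul a) fun n x ⟨hx₁, hx₂⟩ => by
      calc _ ≤ (x - 1) ^ (-k) * a ^ (-(x - 1)) * Real.exp (-b ^ (-x) * t) :=
            rpow_neg_mul_rpow_neg_mul_exp_le ha.le hb.le hk ht (by linarith) (by linarith)
              (by linarith) (by linarith)
        _ = _ := by rw [rpow_neg_sub_one ha0]; ring
  refine ⟨hsum, hL, hH, ?_, by rwa [← integral_const_mul]⟩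
  rw [← integral_const_mul]
  refine integral_Ici_le_tsum_of_le (hL.const_mul _) hsum fun n x ⟨hx₁, hx₂⟩ => ?_
  calc _ = x ^ (-k) * a ^ (-x) * Real.exp (-b ^ (-(x - 1)) * t) := by
        rw [rpow_neg_sub_one ha0]; field_simp
    _ ≤ _ := rpow_neg_mul_rpow_neg_mul_exp_le ha.le hb.le hk ht (by positivity) (by linarith)
        (by linarith) (by linarith)
end

section
/- Let p be a prime and let β > 0, w > 0, 0 < C₁ ≤ C₂ be real constants. Let (b_k)_{k≥1} and (λ_k)_{k≥1} be sequences of real numbers satisfying C₁·p^{−βk} ≤ b_k ≤ C₂·p^{−βk} and w·p^{−k−1} ≤ λ_k ≤ w·p^{−k} for all k ≥ 1. For t ≥ 0 define S(t) = Σ_{k=1}^{∞} b_k·exp(−λ_k·t) (a convergent series). Then 0 < liminf_{t→∞} t^{β}·S(t) and limsup_{t→∞} t^{β}·S(t) < ∞; that is, S(t) decays to 0 at a rate bounded above and below by power laws t^{−β} with the same exponent β. -/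
open Filter

private lemma aux_exp_le (N : ℕ) {u : ℝ} (hu : 0 < u) :
    Real.exp (-u) ≤ (N.factorial : ℝ) / u ^ N := by
  have h1 : u ^ N / (N.factorial : ℝ) ≤ Real.exp u := by
    calc u ^ N / (N.factorial : ℝ)
        ≤ ∑ i ∈ Finset.range (N + 1), u ^ i / (i.factorial : ℝ) :=
          Finset.single_le_sum (f := fun i => u ^ i / (i.factorial : ℝ))
            (fun i _ => by positivity) (Finset.self_mem_range_succ N)
      _ ≤ Real.exp u := Real.sum_le_exp_of_nonneg hu.le _
  have h2 : 0 < u ^ N / (N.factorial : ℝ) := by positivity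
  rw [Real.exp_neg]
  calc (Real.exp u)⁻¹ ≤ (u ^ N / (N.factorial : ℝ))⁻¹ := inv_anti₀ h2 h1
    _ = (N.factorial : ℝ) / u ^ N := by rw [inv_div]

set_option maxHeartbeats 1000000 in
/-- if `C₁ p^{-βk} ≤ b_k ≤ C₂ p^{-βk}` and `w p^{-k-1} ≤ λ_k ≤ w p^{-k}`,
then `S(t) = Σ_{k=1}^∞ b_k exp(-λ_k t)` decays to `0` at a rate bounded above and below by
power laws `t^{-β}` with the same exponent `β`:
`0 < liminf t^β S(t)` and `limsup t^β S(t) < ∞`. -/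
theorem relaxation_powerlaw_decay
    (p : ℕ) [Fact p.Prime] (β w C₁ C₂ : ℝ)
    (hβ : 0 < β) (hw : 0 < w) (hC₁ : 0 < C₁) (hC : C₁ ≤ C₂)
    (bk lam : ℕ → ℝ)
    (hbk : ∀ k : ℕ, 1 ≤ k →
      C₁ * (p : ℝ) ^ (-β * k) ≤ bk k ∧ bk k ≤ C₂ * (p : ℝ) ^ (-β * k))
    (hlam : ∀ k : ℕ, 1 ≤ k →
      w * (p : ℝ) ^ (-(k : ℝ) - 1) ≤ lam k ∧ lam k ≤ w * (p : ℝ) ^ (-(k : ℝ)))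
    (S : ℝ → ℝ)
    (hSsum : ∀ t : ℝ, 0 ≤ t →
      Summable (fun k : ℕ => bk (k + 1) * Real.exp (-lam (k + 1) * t)))
    (hS : ∀ t : ℝ, 0 ≤ t →
      S t = ∑' k : ℕ, bk (k + 1) * Real.exp (-lam (k + 1) * t)) :
    0 < liminf (fun t : ℝ => t ^ β * S t) atTop ∧
    IsBoundedUnder (· ≤ ·) atTop (fun t : ℝ => t ^ β * S t) := by
  have hp : 2 ≤ p := (Fact.out : p.Prime).two_le
  set q : ℝ := (p : ℝ) with hqdef
  have hq1 : (1 : ℝ) < q := by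
    rw [hqdef]; exact_mod_cast (by omega : 1 < p)
  have hq0 : (0 : ℝ) < q := lt_trans one_pos hq1
  have hC₂ : 0 < C₂ := lt_of_lt_of_le hC₁ hC
  set N : ℕ := ⌈β⌉₊ + 1 with hNdef
  have hβN : β < (N : ℝ) := by
    have h1 : β ≤ (⌈β⌉₊ : ℝ) := Nat.le_ceil β
    have h2 : ((⌈β⌉₊ : ℕ) : ℝ) < (N : ℝ) := by exact_mod_cast Nat.lt_succ_self _
    linarith
  set ρ : ℝ := q ^ ((N : ℝ) - β) with hρdef
  have hρ1 : 1 < ρ := by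
    have h := Real.rpow_lt_rpow_of_exponent_lt hq1 (show (0:ℝ) < (N:ℝ) - β by linarith)
    simpa using h
  have hρ0 : 0 < ρ := lt_trans one_pos hρ1
  set E : ℝ := C₂ * (N.factorial : ℝ) * w⁻¹ ^ N * q ^ (2 * (N : ℝ) - β) with hEdef
  have hE0 : 0 ≤ E := by
    rw [hEdef]; positivity
  set r : ℝ := q ^ (-β) with hrdef
  have hr0 : 0 ≤ r := (Real.rpow_pos_of_pos hq0 _).le
  have hr1 : r < 1 := Real.rpow_lt_one_of_one_lt_of_neg hq1 (by linarith)
  set M : ℝ := E / (ρ - 1) + C₂ * (1 - r)⁻¹ with hMdef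
  -- positivity of bk
  have hbpos : ∀ k : ℕ, 0 ≤ bk (k + 1) := by
    intro k
    have h := (hbk (k + 1) (by omega)).1
    have : 0 < C₁ * q ^ (-β * ((k + 1 : ℕ) : ℝ)) := by positivity
    linarith
  -- the main upper bound
  have hupper : ∀ t : ℝ, q ≤ t → t ^ β * S t ≤ M := by
    intro t ht
    have ht0 : 0 < t := lt_of_lt_of_le hq0 ht
    set n : ℕ := ⌊Real.logb q t⌋₊ with hndef
    have hq1t : q ^ (1 : ℝ) ≤ t := by rw [Real.rpow_one]; exact ht
    have hlogb1 : 1 ≤ Real.logb q t := (Real.le_logb_iff_rpow_le hq1 ht0).2 hq1t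
    have hn1 : 1 ≤ n := Nat.le_floor (by exact_mod_cast hlogb1)
    have hfloor_le : (n : ℝ) ≤ Real.logb q t := Nat.floor_le (le_trans zero_le_one hlogb1)
    have hqn_le : q ^ ((n : ℝ)) ≤ t := by
      have h := Real.rpow_le_rpow_of_exponent_le hq1.le hfloor_le
      rwa [Real.rpow_logb hq0 hq1.ne' ht0] at h
    have ht_lt : t < q ^ ((n : ℝ) + 1) := by
      have h := Nat.lt_floor_add_one (Real.logb q t)
      have h2 := Real.rpow_lt_rpow_of_exponent_lt hq1
        (show Real.logb q t < (n:ℝ) + 1 by exact_mod_cast h)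
      rwa [Real.rpow_logb hq0 hq1.ne' ht0] at h2
    set f : ℕ → ℝ := fun k => bk (k + 1) * Real.exp (-lam (k + 1) * t) with hfdef
    have hsum : Summable f := hSsum t ht0.le
    have hSt : S t = ∑' k, f k := hS t ht0.le
    have hf_nonneg : ∀ k, 0 ≤ f k := fun k => mul_nonneg (hbpos k) (Real.exp_pos _).le
    -- per-term upper bound
    have hfub : ∀ k : ℕ, f k ≤
        C₂ * q ^ (-β * ((k : ℝ) + 1)) * Real.exp (-(w * q ^ (-((k : ℝ) + 1) - 1) * t)) := by
      intro k
      have hb := (hbk (k + 1) (by omega)).2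
      have hl := (hlam (k + 1) (by omega)).1
      push_cast at hb hl
      have hexp : Real.exp (-lam (k + 1) * t) ≤
          Real.exp (-(w * q ^ (-((k : ℝ) + 1) - 1) * t)) := by
        apply Real.exp_le_exp.2
        have h := mul_le_mul_of_nonneg_right hl ht0.le
        linarith
      exact mul_le_mul hb hexp (Real.exp_pos _).le (by positivity)
    -- head per-term bound
    have hhead : ∀ k : ℕ, t ^ β * f k ≤ E * t ^ (β - (N : ℝ)) * ρ ^ k := by
      intro k
      set u : ℝ := w * q ^ (-((k : ℝ) + 1) - 1) * t with hudef
      have hu0 : 0 < u := by rw [hudef]; positivity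
      have h1 : f k ≤ C₂ * q ^ (-β * ((k : ℝ) + 1)) * ((N.factorial : ℝ) / u ^ N) :=
        (hfub k).trans
          (mul_le_mul_of_nonneg_left (aux_exp_le N hu0) (by positivity))
      have h2 : t ^ β * f k ≤
          t ^ β * (C₂ * q ^ (-β * ((k : ℝ) + 1)) * ((N.factorial : ℝ) / u ^ N)) :=
        mul_le_mul_of_nonneg_left h1 (Real.rpow_nonneg ht0.le _)
      refine h2.trans (le_of_eq ?_)
      have hu_inv : u⁻¹ = w⁻¹ * q ^ ((k : ℝ) + 2) * t⁻¹ := by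
        rw [hudef, mul_inv, mul_inv, ← Real.rpow_neg hq0.le]
        ring_nf
      have hqpart : q ^ (-β * ((k : ℝ) + 1)) * (q ^ ((k : ℝ) + 2)) ^ N
          = q ^ (2 * (N : ℝ) - β) * ρ ^ k := by
        rw [← Real.rpow_natCast (q ^ ((k : ℝ) + 2)) N, ← Real.rpow_natCast ρ k, hρdef,
          ← Real.rpow_mul hq0.le, ← Real.rpow_mul hq0.le, ← Real.rpow_add hq0,
          ← Real.rpow_add hq0]
        ring_nf
      have htpart : t ^ β * (t⁻¹) ^ N = t ^ (β - (N : ℝ)) := by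
        rw [inv_pow, ← Real.rpow_natCast t N, ← Real.rpow_neg ht0.le, ← Real.rpow_add ht0]
        ring_nf
      calc t ^ β * (C₂ * q ^ (-β * ((k : ℝ) + 1)) * ((N.factorial : ℝ) / u ^ N))
          = t ^ β * (C₂ * q ^ (-β * ((k : ℝ) + 1)) * ((N.factorial : ℝ) * (u⁻¹) ^ N)) := by
            rw [div_eq_mul_inv, inv_pow]
        _ = t ^ β * (C₂ * q ^ (-β * ((k : ℝ) + 1)) * ((N.factorial : ℝ) *
              (w⁻¹ ^ N * (q ^ ((k : ℝ) + 2)) ^ N * (t⁻¹) ^ N))) := by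
            rw [hu_inv, mul_pow, mul_pow]
        _ = (C₂ * (N.factorial : ℝ) * w⁻¹ ^ N) *
              (q ^ (-β * ((k : ℝ) + 1)) * (q ^ ((k : ℝ) + 2)) ^ N) * (t ^ β * (t⁻¹) ^ N) := by
            ring
        _ = (C₂ * (N.factorial : ℝ) * w⁻¹ ^ N) * (q ^ (2 * (N : ℝ) - β) * ρ ^ k) *
              t ^ (β - (N : ℝ)) := by rw [hqpart, htpart]
        _ = E * t ^ (β - (N : ℝ)) * ρ ^ k := by rw [hEdef]; ring
    -- tail per-term bound
    have htail : ∀ k : ℕ, t ^ β * f (k + n) ≤ C₂ * r ^ k := by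
      intro k
      have hb := (hbk (k + n + 1) (by omega)).2
      have hl := (hlam (k + n + 1) (by omega)).1
      push_cast at hb hl
      have hexp : Real.exp (-lam (k + n + 1) * t) ≤ 1 := by
        apply Real.exp_le_one_iff.2
        have h0 : 0 < w * q ^ (-((k : ℝ) + n + 1) - 1) := by positivity
        nlinarith [ht0.le]
      have h2 : f (k + n) ≤ C₂ * q ^ (-β * ((k : ℝ) + n + 1)) := by
        calc f (k + n) = bk (k + n + 1) * Real.exp (-lam (k + n + 1) * t) := rfl
          _ ≤ (C₂ * q ^ (-β * ((k : ℝ) + n + 1))) * 1 :=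
              mul_le_mul hb hexp (Real.exp_pos _).le (by positivity)
          _ = C₂ * q ^ (-β * ((k : ℝ) + n + 1)) := by ring
      have h3 : t ^ β * f (k + n) ≤ t ^ β * (C₂ * q ^ (-β * ((k : ℝ) + n + 1))) :=
        mul_le_mul_of_nonneg_left h2 (Real.rpow_nonneg ht0.le _)
      refine h3.trans ?_
      have hsplit : q ^ (-β * ((k : ℝ) + n + 1)) = q ^ (-β * ((n : ℝ) + 1)) * r ^ k := by
        rw [hrdef, ← Real.rpow_natCast (q ^ (-β)) k, ← Real.rpow_mul hq0.le,
          ← Real.rpow_add hq0]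
        ring_nf
      have htβ : t ^ β * q ^ (-β * ((n : ℝ) + 1)) ≤ 1 := by
        have h4 : t ^ β ≤ (q ^ ((n : ℝ) + 1)) ^ β :=
          Real.rpow_le_rpow ht0.le ht_lt.le hβ.le
        have h5 : (q ^ ((n : ℝ) + 1)) ^ β * q ^ (-β * ((n : ℝ) + 1)) = 1 := by
          rw [← Real.rpow_mul hq0.le, ← Real.rpow_add hq0]
          have he : ((n : ℝ) + 1) * β + -β * ((n : ℝ) + 1) = 0 := by ring
          rw [he, Real.rpow_zero]
        calc t ^ β * q ^ (-β * ((n : ℝ) + 1))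
            ≤ (q ^ ((n : ℝ) + 1)) ^ β * q ^ (-β * ((n : ℝ) + 1)) :=
              mul_le_mul_of_nonneg_right h4 (Real.rpow_pos_of_pos hq0 _).le
          _ = 1 := h5
      calc t ^ β * (C₂ * q ^ (-β * ((k : ℝ) + n + 1)))
          = C₂ * (t ^ β * q ^ (-β * ((n : ℝ) + 1))) * r ^ k := by rw [hsplit]; ring
        _ ≤ C₂ * 1 * r ^ k := by
            apply mul_le_mul_of_nonneg_right _ (pow_nonneg hr0 k)
            exact mul_le_mul_of_nonneg_left htβ hC₂.le
        _ = C₂ * r ^ k := by ring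
    -- combine
    have hsum' : Summable (fun k => t ^ β * f k) := hsum.mul_left _
    have hsplitsum : t ^ β * S t =
        (∑ k ∈ Finset.range n, t ^ β * f k) + ∑' k, t ^ β * f (k + n) := by
      rw [hSt, ← tsum_mul_left, ← Summable.sum_add_tsum_nat_add n hsum']
    rw [hsplitsum]
    have h4 : t ^ (β - (N : ℝ)) ≤ (q ^ ((n : ℝ))) ^ (β - (N : ℝ)) :=
      Real.rpow_le_rpow_of_nonpos (Real.rpow_pos_of_pos hq0 _) hqn_le (by linarith)
    have h5 : (q ^ ((n : ℝ))) ^ (β - (N : ℝ)) * ρ ^ n = 1 := by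
      rw [← Real.rpow_natCast ρ n, hρdef, ← Real.rpow_mul hq0.le, ← Real.rpow_mul hq0.le,
        ← Real.rpow_add hq0]
      have he : (n : ℝ) * (β - (N : ℝ)) + ((N : ℝ) - β) * n = 0 := by ring
      rw [he, Real.rpow_zero]
    have hheadsum : (∑ k ∈ Finset.range n, t ^ β * f k) ≤ E / (ρ - 1) := by
      have h1 : (∑ k ∈ Finset.range n, t ^ β * f k) ≤
          ∑ k ∈ Finset.range n, E * t ^ (β - (N : ℝ)) * ρ ^ k :=
        Finset.sum_le_sum fun k _ => hhead k
      have h3 : ∑ k ∈ Finset.range n, ρ ^ k ≤ ρ ^ n / (ρ - 1) := by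
        rw [geom_sum_eq hρ1.ne' n]
        apply div_le_div_of_nonneg_right _ (by linarith)
        · linarith [pow_pos hρ0 n]
      calc (∑ k ∈ Finset.range n, t ^ β * f k)
          ≤ ∑ k ∈ Finset.range n, E * t ^ (β - (N : ℝ)) * ρ ^ k := h1
        _ = E * t ^ (β - (N : ℝ)) * ∑ k ∈ Finset.range n, ρ ^ k := by rw [Finset.mul_sum]
        _ ≤ E * t ^ (β - (N : ℝ)) * (ρ ^ n / (ρ - 1)) :=
            mul_le_mul_of_nonneg_left h3
              (mul_nonneg hE0 (Real.rpow_nonneg ht0.le _))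
        _ ≤ E * (q ^ ((n : ℝ))) ^ (β - (N : ℝ)) * (ρ ^ n / (ρ - 1)) := by
            exact mul_le_mul_of_nonneg_right (mul_le_mul_of_nonneg_left h4 hE0)
              (div_nonneg (pow_nonneg hρ0.le n) (by linarith))
        _ = E * ((q ^ ((n : ℝ))) ^ (β - (N : ℝ)) * ρ ^ n) / (ρ - 1) := by ring
        _ = E / (ρ - 1) := by rw [h5, mul_one]
    have htailsum : (∑' k, t ^ β * f (k + n)) ≤ C₂ * (1 - r)⁻¹ := by
      have hgsum : Summable (fun k : ℕ => C₂ * r ^ k) :=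
        (summable_geometric_of_lt_one hr0 hr1).mul_left C₂
      have hts : Summable (fun k => t ^ β * f (k + n)) := (summable_nat_add_iff n).2 hsum'
      calc (∑' k, t ^ β * f (k + n)) ≤ ∑' k : ℕ, C₂ * r ^ k :=
            Summable.tsum_le_tsum (fun k => htail k) hts hgsum
        _ = C₂ * (1 - r)⁻¹ := by rw [tsum_mul_left, tsum_geometric_of_lt_one hr0 hr1]
    rw [hMdef]
    exact add_le_add hheadsum htailsum
  -- the lower bound
  have hlower : ∀ t : ℝ, q ≤ t → C₁ * Real.exp (-(w * q)) ≤ t ^ β * S t := by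
    intro t ht
    have ht0 : 0 < t := lt_of_lt_of_le hq0 ht
    set n : ℕ := ⌊Real.logb q t⌋₊ with hndef
    have hq1t : q ^ (1 : ℝ) ≤ t := by rw [Real.rpow_one]; exact ht
    have hlogb1 : 1 ≤ Real.logb q t := (Real.le_logb_iff_rpow_le hq1 ht0).2 hq1t
    have hn1 : 1 ≤ n := Nat.le_floor (by exact_mod_cast hlogb1)
    have hfloor_le : (n : ℝ) ≤ Real.logb q t := Nat.floor_le (le_trans zero_le_one hlogb1)
    have hqn_le : q ^ ((n : ℝ)) ≤ t := by
      have h := Real.rpow_le_rpow_of_exponent_le hq1.le hfloor_le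
      rwa [Real.rpow_logb hq0 hq1.ne' ht0] at h
    have ht_lt : t < q ^ ((n : ℝ) + 1) := by
      have h := Nat.lt_floor_add_one (Real.logb q t)
      have h2 := Real.rpow_lt_rpow_of_exponent_lt hq1
        (show Real.logb q t < (n:ℝ) + 1 by exact_mod_cast h)
      rwa [Real.rpow_logb hq0 hq1.ne' ht0] at h2
    set f : ℕ → ℝ := fun k => bk (k + 1) * Real.exp (-lam (k + 1) * t) with hfdef
    have hsum : Summable f := hSsum t ht0.le
    have hSt : S t = ∑' k, f k := hS t ht0.le
    have hf_nonneg : ∀ k, 0 ≤ f k := fun k => mul_nonneg (hbpos k) (Real.exp_pos _).le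
    have hterm : f (n - 1) = bk n * Real.exp (-lam n * t) := by
      have : n - 1 + 1 = n := Nat.succ_pred_eq_of_pos hn1
      rw [hfdef]; simp only [this]
    have hSge : f (n - 1) ≤ S t := by
      rw [hSt]
      exact Summable.le_tsum hsum (n - 1) fun j _ => hf_nonneg j
    have hb := (hbk n hn1).1
    have hl := (hlam n hn1).2
    have hexp : Real.exp (-(w * q)) ≤ Real.exp (-lam n * t) := by
      apply Real.exp_le_exp.2
      have h1 : lam n * t ≤ w * q ^ (-(n : ℝ)) * t :=
        mul_le_mul_of_nonneg_right hl ht0.le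
      have h2 : q ^ (-(n : ℝ)) * t ≤ q := by
        have h3 : q ^ (-(n : ℝ)) * t ≤ q ^ (-(n : ℝ)) * q ^ ((n : ℝ) + 1) :=
          mul_le_mul_of_nonneg_left ht_lt.le (Real.rpow_pos_of_pos hq0 _).le
        have h4 : q ^ (-(n : ℝ)) * q ^ ((n : ℝ) + 1) = q := by
          rw [← Real.rpow_add hq0]
          have : -(n : ℝ) + ((n : ℝ) + 1) = 1 := by ring
          rw [this, Real.rpow_one]
        linarith
      nlinarith
    have hfn : C₁ * q ^ (-β * (n : ℝ)) * Real.exp (-(w * q)) ≤ f (n - 1) := by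
      rw [hterm]
      exact mul_le_mul hb hexp (Real.exp_pos _).le
        ((mul_nonneg hC₁.le (Real.rpow_pos_of_pos hq0 _).le).trans hb)
    have htq : 1 ≤ t ^ β * q ^ (-β * (n : ℝ)) := by
      have h4 : (q ^ ((n : ℝ))) ^ β ≤ t ^ β :=
        Real.rpow_le_rpow (Real.rpow_pos_of_pos hq0 _).le hqn_le hβ.le
      have h5 : (q ^ ((n : ℝ))) ^ β * q ^ (-β * (n : ℝ)) = 1 := by
        rw [← Real.rpow_mul hq0.le, ← Real.rpow_add hq0]
        have : (n : ℝ) * β + -β * (n : ℝ) = 0 := by ring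
        rw [this, Real.rpow_zero]
      calc (1 : ℝ) = (q ^ ((n : ℝ))) ^ β * q ^ (-β * (n : ℝ)) := h5.symm
        _ ≤ t ^ β * q ^ (-β * (n : ℝ)) :=
            mul_le_mul_of_nonneg_right h4 (Real.rpow_pos_of_pos hq0 _).le
    have hStep : t ^ β * (C₁ * q ^ (-β * (n : ℝ)) * Real.exp (-(w * q))) ≤ t ^ β * S t := by
      apply mul_le_mul_of_nonneg_left (hfn.trans hSge) (Real.rpow_nonneg ht0.le _)
    calc C₁ * Real.exp (-(w * q))
        = (C₁ * Real.exp (-(w * q))) * 1 := by ring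
      _ ≤ (C₁ * Real.exp (-(w * q))) * (t ^ β * q ^ (-β * (n : ℝ))) := by
          apply mul_le_mul_of_nonneg_left htq (by positivity)
      _ = t ^ β * (C₁ * q ^ (-β * (n : ℝ)) * Real.exp (-(w * q))) := by ring
      _ ≤ t ^ β * S t := hStep
  -- conclude
  have hbdd : IsBoundedUnder (· ≤ ·) atTop (fun t : ℝ => t ^ β * S t) := by
    refine ⟨M, ?_⟩
    rw [eventually_map]
    filter_upwards [eventually_ge_atTop q] with t ht using hupper t ht
  refine ⟨?_, hbdd⟩
  have hev : ∀ᶠ t in atTop, C₁ * Real.exp (-(w * q)) ≤ t ^ β * S t := by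
    filter_upwards [eventually_ge_atTop q] with t ht using hlower t ht
  have hli := le_liminf_of_le hbdd.isCoboundedUnder_ge hev
  have hc : 0 < C₁ * Real.exp (-(w * q)) := by positivity
  exact lt_of_lt_of_le hc hli
end
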